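/- Boundedness of the weighted Hilbert transform on Hölder spaces (case k = 0): for all 0 < α′ < α < 1 there exists a constant C = C(α) > 0 such that for every measurable kernel Φ : ℝ × [−1/2,1/2] → ℂ, 1-periodic in the first variable, with ⦀Φ⦀_{0,α′} := ess sup_{ξ∈[−1/2,1/2]} ‖Φ(·,ξ)‖_{C^{0,α′}} < ∞, and every 1-periodic f ∈ C^{0,α}(ℝ;ℂ), the function T_Φ f(s) := (1/(2πi)) ∫_{−1/2}^{1/2} ((f(s+ξ) − f(s))/ξ) Φ(s,ξ) dξ satisfies ‖T_Φ f‖_{C^{0,α′}} ≤ (C/(α−α′)) ⦀Φ⦀_{0,α′} ‖f‖_{C^{0,α}}. -/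

import Mathlib

/-! The increment `f (s + ξ) - f s` is `O(|ξ| ^ α)`, so the integrand of `T_Φ f` is dominated by
`|ξ| ^ (α - 1)`, whose integral over `[-1/2, 1/2]` is at most `2 / α`. For the Hölder quotient,
the difference of the integrands at `s₁` and `s₂` is a second difference of `f` (over `ξ`)
times `Φ(s₁, ξ)`, plus an increment of `f` times `Φ(s₁, ξ) - Φ(s₂, ξ)`. The second difference
is at most `2 Mf min(|s₁ - s₂|, |ξ|) ^ α ≤ 2 Mf |s₁ - s₂| ^ α' |ξ| ^ (α - α')`, and
`|ξ| ^ (α - α' - 1)` has integral at most `2 / (α - α')`; so the absolute constant `C = 8` works. -/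

open MeasureTheory Real

/-- The weighted Hilbert transform
`T_Φ f(s) = (1/(2πi)) ∫_{-1/2}^{1/2} ((f(s+ξ)-f(s))/ξ) Φ(s,ξ) dξ`. -/
noncomputable def weightedHilbert (Φ : ℝ → ℝ → ℂ) (f : ℝ → ℂ) (s : ℝ) : ℂ :=
  (1 / (2 * (π : ℂ) * Complex.I)) *
    ∫ ξ in (-(1:ℝ)/2)..(1/2), ((f (s + ξ) - f s) / (ξ : ℂ)) * Φ s ξ

open Set

section Holder

variable {E : Type*} [SeminormedAddCommGroup E] {f : ℝ → E} {M α : ℝ}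

lemma nonneg_of_norm_sub_le_mul_abs_rpow (hf : ∀ x y, ‖f x - f y‖ ≤ M * |x - y| ^ α) :
    0 ≤ M := by
  simpa using (norm_nonneg _).trans (hf 1 0)

lemma continuous_of_norm_sub_le_mul_abs_rpow (hα : 0 < α)
    (hf : ∀ x y, ‖f x - f y‖ ≤ M * |x - y| ^ α) : Continuous f := by
  refine continuous_iff_continuousAt.2 fun x => tendsto_iff_norm_sub_tendsto_zero.2 ?_
  have hbound : Continuous fun y => M * |y - x| ^ α :=
    continuous_const.mul ((continuous_id.sub continuous_const).abs.rpow_const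
      fun _ => Or.inr hα.le)
  exact squeeze_zero (fun _ => norm_nonneg _) (fun y => hf y x)
    (by simpa [hα.ne'] using hbound.tendsto x)

lemma min_rpow_le_rpow_mul_rpow {a b β : ℝ} (ha : 0 ≤ a) (hb : 0 ≤ b) (hβ : 0 ≤ β)
    (hβα : β ≤ α) : min (a ^ α) (b ^ α) ≤ a ^ β * b ^ (α - β) := by
  have hsplit : ∀ c : ℝ, 0 ≤ c → c ^ α = c ^ β * c ^ (α - β) := fun c hc => by
    rw [← rpow_add_of_nonneg hc hβ (sub_nonneg.2 hβα), add_sub_cancel]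
  rcases le_total a b with hab | hba
  · calc min (a ^ α) (b ^ α) ≤ a ^ α := min_le_left _ _
      _ = a ^ β * a ^ (α - β) := hsplit a ha
      _ ≤ a ^ β * b ^ (α - β) := by gcongr
  · calc min (a ^ α) (b ^ α) ≤ b ^ α := min_le_right _ _
      _ = b ^ β * b ^ (α - β) := hsplit b hb
      _ ≤ a ^ β * b ^ (α - β) := by gcongr

lemma norm_sub_sub_sub_le_of_norm_sub_le (hf : ∀ x y, ‖f x - f y‖ ≤ M * |x - y| ^ α)
    (s₁ s₂ ξ : ℝ) :
    ‖(f (s₁ + ξ) - f s₁) - (f (s₂ + ξ) - f s₂)‖ ≤ 2 * M * min (|s₁ - s₂| ^ α) (|ξ| ^ α) := by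
  have hM := nonneg_of_norm_sub_le_mul_abs_rpow hf
  rw [mul_min_of_nonneg _ _ (by positivity)]
  refine le_min ?_ ?_
  · calc ‖(f (s₁ + ξ) - f s₁) - (f (s₂ + ξ) - f s₂)‖
        = ‖(f (s₁ + ξ) - f (s₂ + ξ)) - (f s₁ - f s₂)‖ := by congr 1; abel
      _ ≤ M * |s₁ + ξ - (s₂ + ξ)| ^ α + M * |s₁ - s₂| ^ α :=
          (norm_sub_le _ _).trans (add_le_add (hf _ _) (hf _ _))
      _ = 2 * M * |s₁ - s₂| ^ α := by rw [add_sub_add_right_eq_sub]; ring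
  · calc ‖(f (s₁ + ξ) - f s₁) - (f (s₂ + ξ) - f s₂)‖
        ≤ M * |s₁ + ξ - s₁| ^ α + M * |s₂ + ξ - s₂| ^ α :=
          (norm_sub_le _ _).trans (add_le_add (hf _ _) (hf _ _))
      _ = 2 * M * |ξ| ^ α := by simp only [add_sub_cancel_left]; ring

end Holder

lemma norm_div_ofReal_le_of_norm_le {z : ℂ} {ξ A a : ℝ} (hA : 0 ≤ A)
    (hz : ‖z‖ ≤ A * |ξ| ^ a) : ‖z / (ξ : ℂ)‖ ≤ A * |ξ| ^ (a - 1) := by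
  rcases eq_or_ne ξ 0 with rfl | hξ
  · simp only [Complex.ofReal_zero, div_zero, norm_zero]
    positivity
  rw [norm_div, Complex.norm_real, Real.norm_eq_abs, rpow_sub_one (abs_ne_zero.2 hξ),
    ← mul_div_assoc]
  exact div_le_div_of_nonneg_right hz (abs_nonneg ξ)

lemma intervalIntegrable_abs_rpow {r : ℝ} (hr : -1 < r) (a b : ℝ) :
    IntervalIntegrable (fun x : ℝ => |x| ^ r) volume a b := by
  refine intervalIntegrable_of_even (by simp) fun c hc => ?_
  refine (intervalIntegral.intervalIntegrable_rpow' hr).congr_ae ?_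
  rw [uIoc_of_le hc.le]
  filter_upwards [ae_restrict_mem measurableSet_Ioc] with x hx
  rw [abs_of_pos hx.1]

lemma integral_abs_rpow_symm {r a : ℝ} (hr : -1 < r) (ha : 0 ≤ a) :
    ∫ x in -a..a, |x| ^ r = 2 * (a ^ (r + 1) / (r + 1)) := by
  have hpos : ∫ x in (0 : ℝ)..a, |x| ^ r = a ^ (r + 1) / (r + 1) := by
    have habs : EqOn (fun x : ℝ => |x| ^ r) (fun x => x ^ r) (uIcc 0 a) := fun x hx => by
      rw [uIcc_of_le ha] at hx
      simp only [abs_of_nonneg hx.1]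
    rw [intervalIntegral.integral_congr habs, integral_rpow (Or.inl hr),
      zero_rpow (by linarith), sub_zero]
  have hneg : ∫ x in -a..0, |x| ^ r = ∫ x in (0 : ℝ)..a, |x| ^ r := by
    simpa using (intervalIntegral.integral_comp_neg (fun x : ℝ => |x| ^ r) (a := 0) (b := a)).symm
  rw [← intervalIntegral.integral_add_adjacent_intervals (intervalIntegrable_abs_rpow hr _ _)
    (intervalIntegrable_abs_rpow hr _ _), hneg, hpos, two_mul]

lemma integral_abs_rpow_sub_one_le {p : ℝ} (hp : 0 < p) :
    ∫ ξ in (-(1 : ℝ) / 2)..(1 / 2), |ξ| ^ (p - 1) ≤ 2 / p := by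
  rw [neg_div, integral_abs_rpow_symm (by linarith) (by norm_num), sub_add_cancel, mul_div_assoc']
  gcongr
  exact mul_le_of_le_one_right zero_le_two (rpow_le_one (by norm_num) (by norm_num) hp.le)

lemma norm_inv_two_pi_I_le_one : ‖1 / (2 * (π : ℂ) * Complex.I)‖ ≤ 1 := by
  rw [norm_div, norm_one, norm_mul, norm_mul, Complex.norm_I, Complex.norm_real,
    Real.norm_of_nonneg pi_pos.le, Complex.norm_two, mul_one, div_le_one (by positivity)]
  linarith [pi_gt_three]

lemma norm_inv_two_pi_I_mul_integral_le {a b : ℝ} (hab : a ≤ b) {g : ℝ → ℂ} {G : ℝ → ℝ}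
    (hG : IntervalIntegrable G volume a b)
    (hgG : ∀ᵐ ξ ∂volume.restrict (Icc a b), ‖g ξ‖ ≤ G ξ) :
    ‖1 / (2 * (π : ℂ) * Complex.I) * ∫ ξ in a..b, g ξ‖ ≤ ∫ ξ in a..b, G ξ := by
  have hint : ‖∫ ξ in a..b, g ξ‖ ≤ ∫ ξ in a..b, G ξ := by
    refine intervalIntegral.norm_integral_le_of_norm_le hab ?_ hG
    rw [← ae_restrict_iff' measurableSet_Ioc]
    exact ae_restrict_of_ae_restrict_of_subset Ioc_subset_Icc_self hgG
  have hG0 : 0 ≤ ∫ ξ in a..b, G ξ :=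
    intervalIntegral.integral_nonneg_of_ae_restrict hab
      (hgG.mono fun ξ h => (norm_nonneg _).trans h)
  rw [norm_mul]
  exact (mul_le_of_le_one_left (norm_nonneg _) norm_inv_two_pi_I_le_one).trans hint

noncomputable def hilbertIntegrand (Φ : ℝ → ℝ → ℂ) (f : ℝ → ℂ) (s ξ : ℝ) : ℂ :=
  (f (s + ξ) - f s) / (ξ : ℂ) * Φ s ξ

lemma weightedHilbert_eq (Φ : ℝ → ℝ → ℂ) (f : ℝ → ℂ) (s : ℝ) :
    weightedHilbert Φ f s = 1 / (2 * (π : ℂ) * Complex.I) *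
      ∫ ξ in (-(1 : ℝ) / 2)..(1 / 2), hilbertIntegrand Φ f s ξ :=
  rfl

section Integrand

variable {Φ : ℝ → ℝ → ℂ} {f : ℝ → ℂ} {MΦ Mf α β : ℝ}

lemma norm_hilbertIntegrand_le (hf : ∀ x y, ‖f x - f y‖ ≤ Mf * |x - y| ^ α) {s ξ : ℝ}
    (hΦ : ‖Φ s ξ‖ ≤ MΦ) : ‖hilbertIntegrand Φ f s ξ‖ ≤ MΦ * Mf * |ξ| ^ (α - 1) := by
  have hMf := nonneg_of_norm_sub_le_mul_abs_rpow hf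
  have hslope : ‖(f (s + ξ) - f s) / (ξ : ℂ)‖ ≤ Mf * |ξ| ^ (α - 1) :=
    norm_div_ofReal_le_of_norm_le hMf (by simpa using hf (s + ξ) s)
  rw [hilbertIntegrand, norm_mul]
  calc _ ≤ Mf * |ξ| ^ (α - 1) * MΦ := mul_le_mul hslope hΦ (norm_nonneg _) (by positivity)
    _ = _ := by ring

lemma norm_hilbertIntegrand_sub_le (hβ : 0 ≤ β) (hβα : β ≤ α)
    (hf : ∀ x y, ‖f x - f y‖ ≤ Mf * |x - y| ^ α) {ξ : ℝ} (hΦ : ∀ s, ‖Φ s ξ‖ ≤ MΦ)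
    (hΦ' : ∀ s s', ‖Φ s ξ - Φ s' ξ‖ ≤ MΦ * |s - s'| ^ β) (s₁ s₂ : ℝ) :
    ‖hilbertIntegrand Φ f s₁ ξ - hilbertIntegrand Φ f s₂ ξ‖ ≤
      MΦ * Mf * |s₁ - s₂| ^ β * (2 * |ξ| ^ (α - β - 1) + |ξ| ^ (α - 1)) := by
  have hMf := nonneg_of_norm_sub_le_mul_abs_rpow hf
  have hMΦ : 0 ≤ MΦ := (norm_nonneg _).trans (hΦ 0)
  have hsecond : ‖((f (s₁ + ξ) - f s₁) - (f (s₂ + ξ) - f s₂)) / (ξ : ℂ)‖ ≤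
      2 * Mf * |s₁ - s₂| ^ β * |ξ| ^ (α - β - 1) := by
    refine norm_div_ofReal_le_of_norm_le (by positivity) ?_
    calc _ ≤ 2 * Mf * min (|s₁ - s₂| ^ α) (|ξ| ^ α) :=
          norm_sub_sub_sub_le_of_norm_sub_le hf s₁ s₂ ξ
      _ ≤ 2 * Mf * (|s₁ - s₂| ^ β * |ξ| ^ (α - β)) := by
          gcongr
          exact min_rpow_le_rpow_mul_rpow (abs_nonneg _) (abs_nonneg _) hβ hβα
      _ = _ := by ring
  have hslope : ‖(f (s₂ + ξ) - f s₂) / (ξ : ℂ)‖ ≤ Mf * |ξ| ^ (α - 1) :=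
    norm_div_ofReal_le_of_norm_le hMf (by simpa using hf (s₂ + ξ) s₂)
  have hsplit : hilbertIntegrand Φ f s₁ ξ - hilbertIntegrand Φ f s₂ ξ =
      ((f (s₁ + ξ) - f s₁) - (f (s₂ + ξ) - f s₂)) / (ξ : ℂ) * Φ s₁ ξ +
        (f (s₂ + ξ) - f s₂) / (ξ : ℂ) * (Φ s₁ ξ - Φ s₂ ξ) := by
    simp only [hilbertIntegrand]; ring
  rw [hsplit]
  refine (norm_add_le _ _).trans ?_
  rw [norm_mul, norm_mul]
  calc _ ≤ 2 * Mf * |s₁ - s₂| ^ β * |ξ| ^ (α - β - 1) * MΦ +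
        Mf * |ξ| ^ (α - 1) * (MΦ * |s₁ - s₂| ^ β) := by
        gcongr
        exacts [hΦ s₁, hΦ' s₁ s₂]
    _ = _ := by ring

end Integrand

section WeightedHilbert

variable {Φ : ℝ → ℝ → ℂ} {f : ℝ → ℂ} {MΦ Mf α β : ℝ}

lemma intervalIntegrable_hilbertIntegrand (hα : 0 < α) (hΦm : Measurable (Function.uncurry Φ))
    (hf : ∀ x y, ‖f x - f y‖ ≤ Mf * |x - y| ^ α)
    (hΦ : ∀ᵐ ξ ∂volume.restrict (Icc (-(1 : ℝ) / 2) (1 / 2)), ∀ s, ‖Φ s ξ‖ ≤ MΦ) (s : ℝ) :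
    IntervalIntegrable (hilbertIntegrand Φ f s) volume (-(1 : ℝ) / 2) (1 / 2) := by
  have hfc := continuous_of_norm_sub_le_mul_abs_rpow hα hf
  have hmeas : Measurable (hilbertIntegrand Φ f s) :=
    (((hfc.comp (continuous_const.add continuous_id)).measurable.sub measurable_const).div
      Complex.measurable_ofReal).mul hΦm.of_uncurry_left
  refine ((intervalIntegrable_abs_rpow (r := α - 1) (by linarith) _ _).const_mul (MΦ * Mf)).mono_fun'
    hmeas.aestronglyMeasurable ?_
  rw [uIoc_of_le (by norm_num)]
  exact ae_restrict_of_ae_restrict_of_subset Ioc_subset_Icc_self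
    (hΦ.mono fun ξ h => norm_hilbertIntegrand_le hf (h s))

lemma norm_weightedHilbert_le (hα : 0 < α) (hf : ∀ x y, ‖f x - f y‖ ≤ Mf * |x - y| ^ α)
    (hΦ : ∀ᵐ ξ ∂volume.restrict (Icc (-(1 : ℝ) / 2) (1 / 2)), ∀ s, ‖Φ s ξ‖ ≤ MΦ)
    (hMΦ : 0 ≤ MΦ) (s : ℝ) :
    ‖weightedHilbert Φ f s‖ ≤ MΦ * Mf * (2 / α) := by
  have hMf := nonneg_of_norm_sub_le_mul_abs_rpow hf
  rw [weightedHilbert_eq]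
  refine (norm_inv_two_pi_I_mul_integral_le (by norm_num)
    ((intervalIntegrable_abs_rpow (r := α - 1) (by linarith) _ _).const_mul (MΦ * Mf))
    (hΦ.mono fun ξ h => norm_hilbertIntegrand_le hf (h s))).trans ?_
  rw [intervalIntegral.integral_const_mul]
  gcongr
  exact integral_abs_rpow_sub_one_le hα

lemma norm_weightedHilbert_sub_le (hβ : 0 ≤ β) (hβα : β < α)
    (hΦm : Measurable (Function.uncurry Φ)) (hf : ∀ x y, ‖f x - f y‖ ≤ Mf * |x - y| ^ α)
    (hΦ : ∀ᵐ ξ ∂volume.restrict (Icc (-(1 : ℝ) / 2) (1 / 2)),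
      (∀ s, ‖Φ s ξ‖ ≤ MΦ) ∧ ∀ s s', ‖Φ s ξ - Φ s' ξ‖ ≤ MΦ * |s - s'| ^ β)
    (hMΦ : 0 ≤ MΦ) (s₁ s₂ : ℝ) :
    ‖weightedHilbert Φ f s₁ - weightedHilbert Φ f s₂‖ ≤
      MΦ * Mf * |s₁ - s₂| ^ β * (2 * (2 / (α - β)) + 2 / α) := by
  have hα : 0 < α := hβ.trans_lt hβα
  have hMf := nonneg_of_norm_sub_le_mul_abs_rpow hf
  have hbound := hΦ.mono fun _ h => h.1
  have hint : ∀ p : ℝ, 0 < p →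
      IntervalIntegrable (fun ξ : ℝ => |ξ| ^ (p - 1)) volume (-(1 : ℝ) / 2) (1 / 2) :=
    fun p hp => intervalIntegrable_abs_rpow (r := p - 1) (by linarith) _ _
  have hint₁ := (hint _ (sub_pos.2 hβα)).const_mul 2
  rw [weightedHilbert_eq, weightedHilbert_eq, ← mul_sub,
    ← intervalIntegral.integral_sub (intervalIntegrable_hilbertIntegrand hα hΦm hf hbound s₁)
      (intervalIntegrable_hilbertIntegrand hα hΦm hf hbound s₂)]
  refine (norm_inv_two_pi_I_mul_integral_le (by norm_num)
    ((hint₁.add (hint α hα)).const_mul (MΦ * Mf * |s₁ - s₂| ^ β))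
    (hΦ.mono fun ξ h => norm_hilbertIntegrand_sub_le hβ hβα.le hf h.1 h.2 s₁ s₂)).trans ?_
  rw [intervalIntegral.integral_const_mul, intervalIntegral.integral_add hint₁ (hint α hα),
    intervalIntegral.integral_const_mul]
  gcongr
  exacts [integral_abs_rpow_sub_one_le (sub_pos.2 hβα), integral_abs_rpow_sub_one_le hα]

end WeightedHilbert

theorem stmt_3_general (α α' : ℝ) (hα'0 : 0 < α') (hα' : α' < α) :
    ∃ C : ℝ, 0 < C ∧
      ∀ (Φ : ℝ → ℝ → ℂ) (f : ℝ → ℂ) (MΦ Mf : ℝ),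
        Measurable (Function.uncurry Φ) →
        (∀ ξ : ℝ, Function.Periodic (fun s => Φ s ξ) 1) →
        (∀ᵐ ξ ∂(volume.restrict (Set.Icc (-(1:ℝ)/2) (1/2))),
          (∀ s : ℝ, ‖Φ s ξ‖ ≤ MΦ) ∧ ∀ s s' : ℝ, ‖Φ s ξ - Φ s' ξ‖ ≤ MΦ * |s - s'| ^ α') →
        Function.Periodic f 1 →
        (∀ s, ‖f s‖ ≤ Mf) →
        (∀ s s', ‖f s - f s'‖ ≤ Mf * |s - s'| ^ α) →
        ∀ s s₁ s₂ : ℝ, s₁ ≠ s₂ →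
          ‖weightedHilbert Φ f s‖ +
              ‖weightedHilbert Φ f s₁ - weightedHilbert Φ f s₂‖ / |s₁ - s₂| ^ α' ≤
            C / (α - α') * MΦ * Mf := by
  refine ⟨8, by norm_num, fun Φ f MΦ Mf hΦm _ hΦ _ _ hf s s₁ s₂ hs => ?_⟩
  have hα : 0 < α := hα'0.trans hα'
  have hMΦ : 0 ≤ MΦ := by
    have : (ae (volume.restrict (Icc (-(1 : ℝ) / 2) (1 / 2)))).NeBot :=
      ae_restrict_neBot.2 (by norm_num [Real.volume_Icc])
    obtain ⟨ξ, hξ, -⟩ := hΦ.exists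
    exact (norm_nonneg _).trans (hξ 0)
  have hMf := nonneg_of_norm_sub_le_mul_abs_rpow hf
  have hsup := norm_weightedHilbert_le hα hf (hΦ.mono fun _ h => h.1) hMΦ s
  have hdiff := norm_weightedHilbert_sub_le hα'0.le hα' hΦm hf hΦ hMΦ s₁ s₂
  have hh : 0 < |s₁ - s₂| ^ α' := rpow_pos_of_pos (abs_pos.2 (sub_ne_zero.2 hs)) _
  have hconst : 2 / α + (2 * (2 / (α - α')) + 2 / α) ≤ 8 / (α - α') := by
    have h8 : 8 / (α - α') = 4 * (2 / (α - α')) := by ring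
    have : 2 / α ≤ 2 / (α - α') :=
      div_le_div_of_nonneg_left zero_le_two (by linarith) (by linarith)
    linarith
  calc _ ≤ MΦ * Mf * (2 / α) + MΦ * Mf * (2 * (2 / (α - α')) + 2 / α) :=
        add_le_add hsup ((div_le_iff₀ hh).2 (hdiff.trans_eq (by ring)))
    _ ≤ MΦ * Mf * (8 / (α - α')) := by rw [← mul_add]; gcongr
    _ = _ := by ring

/-- Boundedness of the weighted Hilbert transform on Hölder spaces (case
`k = 0`): for `0 < α' < α < 1` there is `C = C(α) > 0` such that
`‖T_Φ f‖_{C^{0,α'}} ≤ (C/(α-α')) ⦀Φ⦀_{0,α'} ‖f‖_{C^{0,α}}` for all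
`1`-periodic kernels `Φ` and `1`-periodic `f ∈ C^{0,α}`. -/
theorem stmt_3 (α α' : ℝ) (hα'0 : 0 < α') (hα' : α' < α) (hα : α < 1) :
    ∃ C : ℝ, 0 < C ∧
      ∀ (Φ : ℝ → ℝ → ℂ) (f : ℝ → ℂ) (MΦ Mf : ℝ),
        Measurable (Function.uncurry Φ) →
        (∀ ξ : ℝ, Function.Periodic (fun s => Φ s ξ) 1) →
        (∀ᵐ ξ ∂(volume.restrict (Set.Icc (-(1:ℝ)/2) (1/2))),
          (∀ s : ℝ, ‖Φ s ξ‖ ≤ MΦ) ∧ ∀ s s' : ℝ, ‖Φ s ξ - Φ s' ξ‖ ≤ MΦ * |s - s'| ^ α') →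
        Function.Periodic f 1 →
        (∀ s, ‖f s‖ ≤ Mf) →
        (∀ s s', ‖f s - f s'‖ ≤ Mf * |s - s'| ^ α) →
        ∀ s s₁ s₂ : ℝ, s₁ ≠ s₂ →
          ‖weightedHilbert Φ f s‖ +
              ‖weightedHilbert Φ f s₁ - weightedHilbert Φ f s₂‖ / |s₁ - s₂| ^ α' ≤
            C / (α - α') * MΦ * Mf :=
  stmt_3_general α α' hα'0 hα'
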